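/- arXiv:2605.02019 — 4 statements merged into one kernel-verified Lean document; each statement's English description precedes it below -/
import Mathlib

section
/- Let t_f > 0, let t_fi i ∈ (0, t_f] for each agent i, and let y be a backward solution with horizon t_f and durations t_fi. Define x i t := y i (t_f − t). Then x is a forward simultaneous-arrival solution with common arrival time t_f; moreover, x i t = s i for all t ∈ [0, t_f − t_fi i] (each agent waits at its start state until time t_f − t_fi i and all agents arrive at their goals simultaneously at time t_f). -/
/-- The time reversal of a backward solution is a forward simultaneous-arrival solution
in which each agent waits at its start state until time `t_f − t_fi i`. -/
theorem reversal_of_backward_solution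
    {K : ℕ} (hK : 1 ≤ K) (α : Fin K → Type*)
    (R : ∀ i, α i → Set (ℝ × ℝ)) (F : ∀ i, Set (α i))
    (s g : ∀ i, α i)
    (t_f : ℝ) (ht : 0 < t_f) (t_fi : Fin K → ℝ) (hd : ∀ i, t_fi i ∈ Set.Ioc (0:ℝ) t_f)
    (y : ∀ i, ℝ → α i)
    (hy0 : ∀ i, y i 0 = g i)
    (hpark : ∀ i, ∀ t ∈ Set.Icc (t_fi i) t_f, y i t = s i)
    (hfree : ∀ i, ∀ t ∈ Set.Icc (0:ℝ) t_f, y i t ∈ F i)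
    (hcol : ∀ t ∈ Set.Icc (0:ℝ) t_f, ∀ i j, i ≠ j → R i (y i t) ∩ R j (y j t) = ∅) :
    (∀ i, (fun t => y i (t_f - t)) 0 = s i) ∧
    (∀ i, (fun t => y i (t_f - t)) t_f = g i) ∧
    (∀ i, ∀ t ∈ Set.Icc (0:ℝ) t_f, (fun τ => y i (t_f - τ)) t ∈ F i) ∧
    (∀ t ∈ Set.Icc (0:ℝ) t_f, ∀ i j, i ≠ j →
        R i ((fun τ => y i (t_f - τ)) t) ∩ R j ((fun τ => y j (t_f - τ)) t) = ∅) ∧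
    (∀ i, ∀ t ∈ Set.Icc (0:ℝ) (t_f - t_fi i), (fun τ => y i (t_f - τ)) t = s i) := by
  refine ⟨fun i => ?_, fun i => ?_, fun i t ht' => ?_, fun t ht' i j hij => ?_, fun i t ht' => ?_⟩
  · simp only [sub_zero]
    exact hpark i t_f ⟨(hd i).2, le_refl _⟩
  · simp only [sub_self]
    exact hy0 i
  · exact hfree i _ ⟨by linarith [ht'.2], by linarith [ht'.1]⟩
  · exact hcol _ ⟨by linarith [ht'.2], by linarith [ht'.1]⟩ i j hij
  · exact hpark i _ ⟨by linarith [ht'.2], by linarith [ht'.1, (hd i).1]⟩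
end

section
/- Assume for every agent i that f i (s i) 0 = 0 (remaining at the start state with zero control is a rest point of the dynamics) and that l i a 0 = 0 for every a ∈ E i (waiting has zero running cost). Let (t_f, d, y, v) be a backward-feasible tuple whose backward cost is less than or equal to the backward cost of every backward-feasible tuple. Define x i t := y i (t_f − t), and u i t := 0 for t < t_f − d i, u i t := v i (t_f − t) for t ≥ t_f − d i. Then (t_f, x, u) is a forward-feasible tuple, and its cost Σ_i ∫_0^{t_f} l i (x i t) (u i t) dt is less than or equal to the cost Σ_i ∫_0^{t'_f} l i (x' i t) (u' i t) dt of every forward-feasible tuple (t'_f, x', u'). (Optimality of the padded reversal of an optimal backward solution under zero waiting cost.) -/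
open MeasureTheory in
/-- A forward-feasible tuple: all agents start at `s`, arrive at `g` at the common time `tf`,
respect free spaces, admissible controls and dynamics, are pairwise collision-free, and the
running costs are integrable. -/
def IsForwardFeasible {K : ℕ}
    (E : Fin K → Type*) [∀ i, NormedAddCommGroup (E i)] [∀ i, NormedSpace ℝ (E i)]
    (β : Fin K → Type*) [∀ i, Zero (β i)]
    (R : ∀ i, E i → Set (ℝ × ℝ)) (F : ∀ i, Set (E i)) (U : ∀ i, Set (β i))
    (f : ∀ i, E i → β i → E i) (l : ∀ i, E i → β i → ℝ) (s g : ∀ i, E i)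
    (tf : ℝ) (x : ∀ i, ℝ → E i) (u : ∀ i, ℝ → β i) : Prop :=
  0 < tf ∧
  (∀ i, x i 0 = s i) ∧
  (∀ i, x i tf = g i) ∧
  (∀ i, ∀ t ∈ Set.Icc (0:ℝ) tf, x i t ∈ F i) ∧
  (∀ i, ∀ t ∈ Set.Icc (0:ℝ) tf, u i t ∈ U i) ∧
  (∀ i, ∀ t ∈ Set.Ioo (0:ℝ) tf, HasDerivAt (x i) (f i (x i t) (u i t)) t) ∧
  (∀ t ∈ Set.Icc (0:ℝ) tf, ∀ i j, i ≠ j → R i (x i t) ∩ R j (x j t) = ∅) ∧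
  (∀ i, IntervalIntegrable (fun t => l i (x i t) (u i t)) volume 0 tf)

open MeasureTheory in
/-- A backward-feasible tuple: all agents start at `g`, reach `s` at their individual duration
`d i` and park there with zero control, respect free spaces, admissible controls and the
time-reversed dynamics, are pairwise collision-free, and the running costs are integrable over
the active durations. -/
def IsBackwardFeasible {K : ℕ}
    (E : Fin K → Type*) [∀ i, NormedAddCommGroup (E i)] [∀ i, NormedSpace ℝ (E i)]
    (β : Fin K → Type*) [∀ i, Zero (β i)]
    (R : ∀ i, E i → Set (ℝ × ℝ)) (F : ∀ i, Set (E i)) (U : ∀ i, Set (β i))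
    (f : ∀ i, E i → β i → E i) (l : ∀ i, E i → β i → ℝ) (s g : ∀ i, E i)
    (tf : ℝ) (d : Fin K → ℝ) (y : ∀ i, ℝ → E i) (v : ∀ i, ℝ → β i) : Prop :=
  0 < tf ∧
  (∀ i, d i ∈ Set.Ioc (0:ℝ) tf) ∧
  (∀ i, y i 0 = g i) ∧
  (∀ i, ∀ t ∈ Set.Icc (d i) tf, y i t = s i) ∧
  (∀ i, ∀ t ∈ Set.Ioo (d i) tf, v i t = 0) ∧
  (∀ i, ∀ t ∈ Set.Icc (0:ℝ) tf, y i t ∈ F i) ∧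
  (∀ i, ∀ t ∈ Set.Icc (0:ℝ) tf, v i t ∈ U i) ∧
  (∀ i, ∀ t ∈ Set.Ioo (0:ℝ) tf, HasDerivAt (y i) (-f i (y i t) (v i t)) t) ∧
  (∀ t ∈ Set.Icc (0:ℝ) tf, ∀ i j, i ≠ j → R i (y i t) ∩ R j (y j t) = ∅) ∧
  (∀ i, IntervalIntegrable (fun t => l i (y i t) (v i t)) volume 0 (d i))

/-!
Reversing time, `t ↦ tf - t`, swaps the two notions of feasibility and preserves each agent's
cost. A backward solution in which agent `i` is done at time `d i` becomes, after reversal, a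
forward solution in which agent `i` waits at `s i` until `tf - d i`; waiting costs nothing, so
its cost is the backward cost. Conversely every forward solution reverses to a backward one
with all durations equal to its horizon, so backward optimality gives forward optimality.
-/

open Set MeasureTheory

lemma Set.const_sub_mem_Icc_zero {c t : ℝ} (ht : t ∈ Icc 0 c) : c - t ∈ Icc 0 c :=
  ⟨by linarith [ht.2], by linarith [ht.1]⟩

lemma Set.const_sub_mem_Ioo_zero {c t : ℝ} (ht : t ∈ Ioo 0 c) : c - t ∈ Ioo 0 c :=
  ⟨by linarith [ht.2], by linarith [ht.1]⟩

section IntervalIntegral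

variable {E : Type*} [NormedAddCommGroup E] {f : ℝ → E} {a b c : ℝ}

lemma intervalIntegral.integral_comp_const_sub_self [NormedSpace ℝ E] (f : ℝ → E) (c : ℝ) :
    ∫ t in (0:ℝ)..c, f (c - t) = ∫ t in (0:ℝ)..c, f t := by
  simp [intervalIntegral.integral_comp_sub_left f c (a := 0) (b := c)]

lemma IntervalIntegrable.comp_const_sub_self (hf : IntervalIntegrable f volume 0 c) :
    IntervalIntegrable (fun t => f (c - t)) volume 0 c := by
  simpa using (hf.comp_sub_left c).symm

lemma IntervalIntegrable.of_eqOn_zero_Ioo (hab : a ≤ b) (h : EqOn f 0 (Ioo a b)) :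
    IntervalIntegrable f volume a b :=
  (intervalIntegrable_iff_integrableOn_Ioo_of_le hab).2
    (integrableOn_zero.congr_fun h.symm measurableSet_Ioo)

lemma intervalIntegral.integral_eq_zero_of_eqOn_zero_Ioo [NormedSpace ℝ E] (hab : a ≤ b)
    (h : EqOn f 0 (Ioo a b)) : ∫ t in a..b, f t = 0 := by
  rw [intervalIntegral.integral_of_le hab, integral_Ioc_eq_integral_Ioo,
    setIntegral_congr_fun measurableSet_Ioo h]
  simp

end IntervalIntegral

lemma ite_lt_const_sub_eq_of_eqOn_zero {β : Type*} [Zero β] {v : ℝ → β} {tf d t : ℝ}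
    (hv : EqOn v 0 (Ioo d tf)) (ht : 0 < t) :
    (if t < tf - d then 0 else v (tf - t)) = v (tf - t) := by
  split_ifs with h
  · exact (hv ⟨by linarith, by linarith⟩).symm
  · rfl

section Feasibility

variable {K : ℕ} {E : Fin K → Type*} [∀ i, NormedAddCommGroup (E i)] [∀ i, NormedSpace ℝ (E i)]
  {β : Fin K → Type*} [∀ i, Zero (β i)]
  {R : ∀ i, E i → Set (ℝ × ℝ)} {F : ∀ i, Set (E i)} {U : ∀ i, Set (β i)}
  {f : ∀ i, E i → β i → E i} {l : ∀ i, E i → β i → ℝ} {s g : ∀ i, E i}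

theorem IsForwardFeasible.isBackwardFeasible_reverse {tf : ℝ} {x : ∀ i, ℝ → E i}
    {u : ∀ i, ℝ → β i} (h : IsForwardFeasible E β R F U f l s g tf x u) :
    IsBackwardFeasible E β R F U f l s g tf (fun _ => tf)
      (fun i t => x i (tf - t)) (fun i t => u i (tf - t)) := by
  obtain ⟨htf, hs, hg, hF, hU, hderiv, hcol, hint⟩ := h
  refine ⟨htf, fun _ => ⟨htf, le_rfl⟩, fun i => by simpa using hg i, ?_,
    fun i t ht => absurd (ht.1.trans ht.2) (lt_irrefl _),
    fun i t ht => hF i _ (const_sub_mem_Icc_zero ht),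
    fun i t ht => hU i _ (const_sub_mem_Icc_zero ht),
    fun i t ht => (hderiv i _ (const_sub_mem_Ioo_zero ht)).comp_const_sub tf t,
    fun t ht => hcol _ (const_sub_mem_Icc_zero ht),
    fun i => (hint i).comp_const_sub_self⟩
  · intro i t ht
    show x i (tf - t) = s i
    rw [le_antisymm ht.2 ht.1, sub_self, hs]

variable {tf : ℝ} {d : Fin K → ℝ} {y : ∀ i, ℝ → E i} {v : ∀ i, ℝ → β i}

lemma IsBackwardFeasible.cost_eqOn_zero (h : IsBackwardFeasible E β R F U f l s g tf d y v)
    (hl0 : ∀ i, ∀ a : E i, l i a 0 = 0) (i : Fin K) :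
    EqOn (fun t => l i (y i t) (v i t)) 0 (Ioo (d i) tf) := by
  obtain ⟨-, -, -, -, hv0, -⟩ := h
  intro t ht
  simp only [hv0 i t ht, hl0, Pi.zero_apply]

lemma IsBackwardFeasible.intervalIntegrable_cost
    (h : IsBackwardFeasible E β R F U f l s g tf d y v)
    (hl0 : ∀ i, ∀ a : E i, l i a 0 = 0) (i : Fin K) :
    IntervalIntegrable (fun t => l i (y i t) (v i t)) volume 0 tf := by
  have hzero := h.cost_eqOn_zero hl0 i
  obtain ⟨-, hd, -, -, -, -, -, -, -, hint⟩ := h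
  exact (hint i).trans (.of_eqOn_zero_Ioo (hd i).2 hzero)

lemma IsBackwardFeasible.integral_cost (h : IsBackwardFeasible E β R F U f l s g tf d y v)
    (hl0 : ∀ i, ∀ a : E i, l i a 0 = 0) (i : Fin K) :
    ∫ t in (0:ℝ)..tf, l i (y i t) (v i t) = ∫ t in (0:ℝ)..(d i), l i (y i t) (v i t) := by
  have hzero := h.cost_eqOn_zero hl0 i
  have hint_tf := h.intervalIntegrable_cost hl0 i
  obtain ⟨-, hd, -, -, -, -, -, -, -, hint⟩ := h
  rw [← intervalIntegral.integral_add_adjacent_intervals (hint i) ((hint i).symm.trans hint_tf),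
    intervalIntegral.integral_eq_zero_of_eqOn_zero_Ioo (hd i).2 hzero, add_zero]

theorem IsBackwardFeasible.isForwardFeasible_padded_reverse
    (h : IsBackwardFeasible E β R F U f l s g tf d y v)
    (hU0 : ∀ i, (0 : β i) ∈ U i) (hl0 : ∀ i, ∀ a : E i, l i a 0 = 0) :
    IsForwardFeasible E β R F U f l s g tf (fun i t => y i (tf - t))
      (fun i t => if t < tf - d i then (0 : β i) else v i (tf - t)) := by
  have hint := h.intervalIntegrable_cost hl0
  obtain ⟨htf, hd, hg, hs, hv0, hF, hU, hderiv, hcol, -⟩ := h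
  have hpad (i : Fin K) {t : ℝ} (ht : 0 < t) := ite_lt_const_sub_eq_of_eqOn_zero (hv0 i) ht
  refine ⟨htf, fun i => by simpa using hs i tf ⟨(hd i).2, le_rfl⟩, fun i => by simpa using hg i,
    fun i t ht => hF i _ (const_sub_mem_Icc_zero ht), ?_, ?_,
    fun t ht => hcol _ (const_sub_mem_Icc_zero ht), fun i => ?_⟩
  · intro i t ht
    dsimp only
    split_ifs
    exacts [hU0 i, hU i _ (const_sub_mem_Icc_zero ht)]
  · intro i t ht
    dsimp only
    rw [hpad i ht.1]
    simpa using (hderiv i _ (const_sub_mem_Ioo_zero ht)).comp_const_sub tf t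
  · refine (hint i).comp_const_sub_self.congr fun t ht => ?_
    rw [uIoc_of_le htf.le] at ht
    simp only [hpad i ht.1]

lemma IsBackwardFeasible.integral_padded_reverse_cost
    (h : IsBackwardFeasible E β R F U f l s g tf d y v)
    (hl0 : ∀ i, ∀ a : E i, l i a 0 = 0) (i : Fin K) :
    ∫ t in (0:ℝ)..tf, l i (y i (tf - t)) (if t < tf - d i then (0 : β i) else v i (tf - t)) =
      ∫ t in (0:ℝ)..(d i), l i (y i t) (v i t) := by
  rw [← h.integral_cost hl0 i,
    ← intervalIntegral.integral_comp_const_sub_self (fun t => l i (y i t) (v i t))]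
  obtain ⟨htf, -, -, -, hv0, -⟩ := h
  -- `Ι 0 tf` leaves out `t = 0`, where the padded control is `0` but `v i tf` need not be.
  refine intervalIntegral.integral_congr_ae (.of_forall fun t ht => ?_)
  rw [uIoc_of_le htf.le] at ht
  rw [ite_lt_const_sub_eq_of_eqOn_zero (hv0 i) ht.1]

end Feasibility

theorem padded_reversal_of_optimal_backward_is_optimal_general
    {K : ℕ}
    (E : Fin K → Type*) [∀ i, NormedAddCommGroup (E i)] [∀ i, NormedSpace ℝ (E i)]
    (β : Fin K → Type*) [∀ i, Zero (β i)]
    (R : ∀ i, E i → Set (ℝ × ℝ)) (F : ∀ i, Set (E i)) (U : ∀ i, Set (β i))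
    (hU : ∀ i, (0 : β i) ∈ U i)
    (f : ∀ i, E i → β i → E i) (l : ∀ i, E i → β i → ℝ) (s g : ∀ i, E i)
    (hl0 : ∀ i, ∀ a : E i, l i a 0 = 0)
    (tf : ℝ) (d : Fin K → ℝ) (y : ∀ i, ℝ → E i) (v : ∀ i, ℝ → β i)
    (hback : IsBackwardFeasible E β R F U f l s g tf d y v)
    (hopt : ∀ (tf' : ℝ) (d' : Fin K → ℝ) (y' : ∀ i, ℝ → E i) (v' : ∀ i, ℝ → β i),
      IsBackwardFeasible E β R F U f l s g tf' d' y' v' →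
      (∑ i, ∫ t in (0:ℝ)..(d i), l i (y i t) (v i t)) ≤
        ∑ i, ∫ t in (0:ℝ)..(d' i), l i (y' i t) (v' i t)) :
    IsForwardFeasible E β R F U f l s g tf
        (fun i t => y i (tf - t))
        (fun i t => if t < tf - d i then (0 : β i) else v i (tf - t)) ∧
    (∀ (tf' : ℝ) (x' : ∀ i, ℝ → E i) (u' : ∀ i, ℝ → β i),
      IsForwardFeasible E β R F U f l s g tf' x' u' →
      (∑ i, ∫ t in (0:ℝ)..tf,
          l i (y i (tf - t)) (if t < tf - d i then (0 : β i) else v i (tf - t))) ≤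
        ∑ i, ∫ t in (0:ℝ)..tf', l i (x' i t) (u' i t)) := by
  refine ⟨hback.isForwardFeasible_padded_reverse hU hl0, fun tf' x' u' hfwd => ?_⟩
  calc (∑ i, ∫ t in (0:ℝ)..tf,
          l i (y i (tf - t)) (if t < tf - d i then (0 : β i) else v i (tf - t)))
      = ∑ i, ∫ t in (0:ℝ)..(d i), l i (y i t) (v i t) :=
        Finset.sum_congr rfl fun i _ => hback.integral_padded_reverse_cost hl0 i
    _ ≤ ∑ i, ∫ t in (0:ℝ)..tf', l i (x' i (tf' - t)) (u' i (tf' - t)) :=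
        hopt _ _ _ _ hfwd.isBackwardFeasible_reverse
    _ = ∑ i, ∫ t in (0:ℝ)..tf', l i (x' i t) (u' i t) :=
        Finset.sum_congr rfl fun i _ =>
          intervalIntegral.integral_comp_const_sub_self (fun t => l i (x' i t) (u' i t)) tf'

/-- Under zero waiting cost, the padded reversal of a backward-cost-optimal backward solution
is a forward-feasible tuple that is optimal among all forward-feasible tuples. -/
theorem padded_reversal_of_optimal_backward_is_optimal
    {K : ℕ} (hK : 1 ≤ K)
    (E : Fin K → Type*) [∀ i, NormedAddCommGroup (E i)] [∀ i, NormedSpace ℝ (E i)]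
    (β : Fin K → Type*) [∀ i, Zero (β i)]
    (R : ∀ i, E i → Set (ℝ × ℝ)) (F : ∀ i, Set (E i)) (U : ∀ i, Set (β i))
    (hU : ∀ i, (0 : β i) ∈ U i)
    (f : ∀ i, E i → β i → E i) (l : ∀ i, E i → β i → ℝ) (s g : ∀ i, E i)
    (hrest : ∀ i, f i (s i) 0 = 0)
    (hl0 : ∀ i, ∀ a : E i, l i a 0 = 0)
    (tf : ℝ) (d : Fin K → ℝ) (y : ∀ i, ℝ → E i) (v : ∀ i, ℝ → β i)
    (hback : IsBackwardFeasible E β R F U f l s g tf d y v)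
    (hopt : ∀ (tf' : ℝ) (d' : Fin K → ℝ) (y' : ∀ i, ℝ → E i) (v' : ∀ i, ℝ → β i),
      IsBackwardFeasible E β R F U f l s g tf' d' y' v' →
      (∑ i, ∫ t in (0:ℝ)..(d i), l i (y i t) (v i t)) ≤
        ∑ i, ∫ t in (0:ℝ)..(d' i), l i (y' i t) (v' i t)) :
    IsForwardFeasible E β R F U f l s g tf
        (fun i t => y i (tf - t))
        (fun i t => if t < tf - d i then (0 : β i) else v i (tf - t)) ∧
    (∀ (tf' : ℝ) (x' : ∀ i, ℝ → E i) (u' : ∀ i, ℝ → β i),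
      IsForwardFeasible E β R F U f l s g tf' x' u' →
      (∑ i, ∫ t in (0:ℝ)..tf,
          l i (y i (tf - t)) (if t < tf - d i then (0 : β i) else v i (tf - t))) ≤
        ∑ i, ∫ t in (0:ℝ)..tf', l i (x' i t) (u' i t)) :=
  padded_reversal_of_optimal_backward_is_optimal_general E β R F U hU f l s g hl0 tf d y v hback
    hopt
end

section
/- Let t_f > 0, let x̄ be a family of trajectories pairwise collision-free and respecting the free spaces on [0, t_f], and let 0 ≤ a, T > 0 with a + T ≤ t_f. Let 0 < T* ≤ T and set ΔT = T − T*. Let x* be a family of trajectories pairwise collision-free and respecting the free spaces on [0, T*] with x* i 0 = x̄ i a and x* i T* = x̄ i (a + T) for every i. Define the candidate trajectories z i t := x̄ i t for t ≤ a, z i t := x* i (t − a) for a ≤ t ≤ a + T*, and z i t := x̄ i (t + ΔT) for t ≥ a + T* (these definitions agree at the junction times). Then z is pairwise collision-free and respects the free spaces on [0, t_f − ΔT], and z i 0 = x̄ i 0 and z i (t_f − ΔT) = x̄ i t_f for every i; in particular, all agents still start and end at their original states and arrive simultaneously at the new common time t_f − ΔT. -/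
/-- Splicing an improved segment into a feasible plan yields a feasible plan: the candidate
trajectories are collision-free and respect the free spaces on `[0, t_f − ΔT]`, start at the
original start states, and all arrive simultaneously at the new common time `t_f − ΔT`. -/
theorem candidate_solution_feasible
    {K : ℕ} (hK : 1 ≤ K) (α : Fin K → Type*)
    (R : ∀ i, α i → Set (ℝ × ℝ)) (F : ∀ i, Set (α i))
    (xb : ∀ i, ℝ → α i) (t_f a T Ts : ℝ)
    (ht : 0 < t_f) (ha : 0 ≤ a) (hT : 0 < T) (haT : a + T ≤ t_f)
    (hTs0 : 0 < Ts) (hTsT : Ts ≤ T)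
    (hbcol : ∀ t ∈ Set.Icc (0:ℝ) t_f, ∀ i j, i ≠ j → R i (xb i t) ∩ R j (xb j t) = ∅)
    (hbfree : ∀ i, ∀ t ∈ Set.Icc (0:ℝ) t_f, xb i t ∈ F i)
    (xs : ∀ i, ℝ → α i)
    (hscol : ∀ t ∈ Set.Icc (0:ℝ) Ts, ∀ i j, i ≠ j → R i (xs i t) ∩ R j (xs j t) = ∅)
    (hsfree : ∀ i, ∀ t ∈ Set.Icc (0:ℝ) Ts, xs i t ∈ F i)
    (hstart : ∀ i, xs i 0 = xb i a)
    (hend : ∀ i, xs i Ts = xb i (a + T)) :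
    let z : ∀ i : Fin K, ℝ → α i := fun i t =>
      if t ≤ a then xb i t
      else if t ≤ a + Ts then xs i (t - a)
      else xb i (t + (T - Ts))
    (∀ t ∈ Set.Icc (0:ℝ) (t_f - (T - Ts)), ∀ i j, i ≠ j →
        R i (z i t) ∩ R j (z j t) = ∅) ∧
    (∀ i, ∀ t ∈ Set.Icc (0:ℝ) (t_f - (T - Ts)), z i t ∈ F i) ∧
    (∀ i, z i 0 = xb i 0) ∧
    (∀ i, z i (t_f - (T - Ts)) = xb i t_f) := by
  intro z
  refine ⟨?_, ?_, ?_, ?_⟩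
  · intro t ht' i j hij
    simp only [z]
    split_ifs with h1 h2
    · exact hbcol t ⟨ht'.1, le_trans h1 (by linarith)⟩ i j hij
    · exact hscol (t - a) ⟨by linarith [not_le.mp h1], by linarith⟩ i j hij
    · exact hbcol (t + (T - Ts)) ⟨by linarith [ht'.1], by linarith [ht'.2]⟩ i j hij
  · intro i t ht'
    simp only [z]
    split_ifs with h1 h2
    · exact hbfree i t ⟨ht'.1, le_trans h1 (by linarith)⟩
    · exact hsfree i (t - a) ⟨by linarith [not_le.mp h1], by linarith⟩
    · exact hbfree i (t + (T - Ts)) ⟨by linarith [ht'.1], by linarith [ht'.2]⟩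
  · intro i
    simp only [z, if_pos ha]
  · intro i
    simp only [z]
    split_ifs with h1 h2
    · linarith
    · have : t_f - (T - Ts) - a = Ts := by linarith
      rw [this, hend]
      congr 1
      linarith
    · congr 1
      ring
end

section
/- Let E be a real normed vector space, β a type with a zero element, f : E → β → E, s ∈ E with f s 0 = 0, and let 0 < d ≤ t_f. Let y : ℝ → E and v : ℝ → β satisfy: HasDerivAt y (−f (y t) (v t)) t for all t ∈ (0, t_f), y t = s for all t ∈ [d, t_f], and v t = 0 for all t ∈ (d, t_f). Define the padded time-reversed trajectory x t := y (t_f − t) and control u t := 0 for t < t_f − d, u t := v (t_f − t) for t ≥ t_f − d. Then HasDerivAt x (f (x t) (u t)) t for all t ∈ (0, t_f); that is, the padded reversal of a trajectory of the time-reversed system that parks at the rest point s is a trajectory of the forward system ẋ = f(x, u) on the whole interval, including the waiting segment and the junction time t_f − d. -/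
lemma padded_control_eq {β : Type*} [Zero β] {v : ℝ → β} {a d t : ℝ} (ht : 0 < t)
    (hv : ∀ σ ∈ Set.Ioo d a, v σ = 0) :
    (if t < a - d then (0 : β) else v (a - t)) = v (a - t) := by
  split_ifs with h
  · exact (hv _ ⟨by linarith, by linarith⟩).symm
  · rfl

theorem padded_reversal_hasDerivAt_general
    {E : Type*} [NormedAddCommGroup E] [NormedSpace ℝ E] {β : Type*} [Zero β]
    (f : E → β → E)
    (t_f d : ℝ)
    (y : ℝ → E) (v : ℝ → β)
    (hder : ∀ t ∈ Set.Ioo (0:ℝ) t_f, HasDerivAt y (-f (y t) (v t)) t)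
    (hv : ∀ t ∈ Set.Ioo d t_f, v t = 0) :
    ∀ t ∈ Set.Ioo (0:ℝ) t_f,
      HasDerivAt (fun τ => y (t_f - τ))
        (f ((fun τ => y (t_f - τ)) t)
           ((fun τ => if τ < t_f - d then (0:β) else v (t_f - τ)) t)) t := by
  intro t ht
  have hrev : t_f - t ∈ Set.Ioo (0:ℝ) t_f := ⟨by linarith [ht.2], by linarith [ht.1]⟩
  simp only [padded_control_eq ht.1 hv]
  simpa using (hder _ hrev).comp_const_sub t_f t

/-- The padded reversal of a trajectory of the time-reversed system that parks at a rest point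
`s` is a trajectory of the forward system `ẋ = f(x, u)` on all of `(0, t_f)`. -/
theorem padded_reversal_hasDerivAt
    {E : Type*} [NormedAddCommGroup E] [NormedSpace ℝ E] {β : Type*} [Zero β]
    (f : E → β → E) (s : E) (hrest : f s 0 = 0)
    (t_f d : ℝ) (hd0 : 0 < d) (hdt : d ≤ t_f)
    (y : ℝ → E) (v : ℝ → β)
    (hder : ∀ t ∈ Set.Ioo (0:ℝ) t_f, HasDerivAt y (-f (y t) (v t)) t)
    (hpark : ∀ t ∈ Set.Icc d t_f, y t = s)
    (hv : ∀ t ∈ Set.Ioo d t_f, v t = 0) :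
    ∀ t ∈ Set.Ioo (0:ℝ) t_f,
      HasDerivAt (fun τ => y (t_f - τ))
        (f ((fun τ => y (t_f - τ)) t)
           ((fun τ => if τ < t_f - d then (0:β) else v (t_f - τ)) t)) t :=
  padded_reversal_hasDerivAt_general f t_f d y v hder hv
end
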